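/- (Variational Policy Improvement) Let π_old be a joint policy and let (π_new^i, q_new) maximize, for every state s, the objective E_{a^i~π^i, a^{-i}~π_old^{-i}}[Q^{π_old}(s,a) − β log π̃^i(a^i|s) + (β/N)Σ_{j≠i} log q^{(i,j)}(a^i,a^j|s)] over policies π^i and variational distributions q. Then the new joint policy (π_new^i, π_old^{-i}) satisfies Q^{(π_new^i, π_old^{-i})}(s,a) ≥ Q^{(π_old^i, π_old^{-i})}(s,a) for all states s and joint actions a. -/
import Mathlib


open BigOperators

variable {S Ai Ao Qv : Type*}

/-- The per-state improvement objective for agent `i`: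
`E_{aⁱ∼πⁱ, a⁻ⁱ∼π_old⁻ⁱ}[Q(s,a) − β log πⁱ(aⁱ|s) + (β/N)Σ_{j≠i} log q^{(i,j)}(aⁱ,aʲ|s)]`,
where the variational bonus `(β/N)Σ_{j≠i} log q^{(i,j)}` is the function `c q s aⁱ a⁻ⁱ`. -/
noncomputable def improveObj [Fintype Ai] [Fintype Ao]
    (β : ℝ) (c : Qv → S → Ai → Ao → ℝ) (polo : S → Ao → ℝ)
    (Q : S → Ai × Ao → ℝ) (poli : S → Ai → ℝ) (q : Qv) (s : S) : ℝ :=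
  ∑ ai, ∑ ao, poli s ai * polo s ao *
    (Q s (ai, ao) - β * Real.log (poli s ai) + c q s ai ao)

/-- `Q` is the Q-function of joint policy `(poli, polo)` with variational
distribution `q`: the fixed point of the modified Bellman equation
`Q(s,a) = r(s,a) + γ E_{s'}[V(s')]` where
`V(s') = E_{a∼π}[Q(s',a) − β log πⁱ(aⁱ|s') + (β/N)Σ_{j≠i} log q^{(i,j)}]`. -/
def isQFun [Fintype S] [Fintype Ai] [Fintype Ao]
    (r : S → Ai × Ao → ℝ) (γ : ℝ) (p : S → Ai × Ao → S → ℝ)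
    (β : ℝ) (c : Qv → S → Ai → Ao → ℝ) (polo : S → Ao → ℝ)
    (poli : S → Ai → ℝ) (q : Qv) (Q : S → Ai × Ao → ℝ) : Prop :=
  ∀ s a, Q s a = r s a + γ * ∑ s', p s a s' * improveObj β c polo Q poli q s'

/-- (Variational Policy Improvement) If `(π_new^i, q_new)` maximizes, at every
state, the objective
`E_{aⁱ∼πⁱ, a⁻ⁱ∼π_old⁻ⁱ}[Q^{π_old}(s,a) − β log πⁱ(aⁱ|s) + (β/N)Σ_{j≠i} log q^{(i,j)}(aⁱ,aʲ|s)]`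
over policies `πⁱ` and variational distributions `q`, then
`Q^{(π_new^i, π_old^{-i})}(s,a) ≥ Q^{(π_old^i, π_old^{-i})}(s,a)` for all `(s,a)`. -/
theorem variational_policy_improvement
    [Fintype S] [Fintype Ai] [Fintype Ao]
    (r : S → Ai × Ao → ℝ) (γ : ℝ) (hγ0 : 0 ≤ γ) (hγ1 : γ < 1)
    (p : S → Ai × Ao → S → ℝ)
    (hp_nonneg : ∀ s a s', 0 ≤ p s a s') (hp_sum : ∀ s a, ∑ s', p s a s' = 1)
    (β : ℝ) (hβ : 0 < β)
    (c : Qv → S → Ai → Ao → ℝ)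
    (polo : S → Ao → ℝ)
    (hpolo_nonneg : ∀ s ao, 0 ≤ polo s ao) (hpolo_sum : ∀ s, ∑ ao, polo s ao = 1)
    (poliOld poliNew : S → Ai → ℝ)
    (hold_nonneg : ∀ s ai, 0 ≤ poliOld s ai) (hold_sum : ∀ s, ∑ ai, poliOld s ai = 1)
    (hnew_nonneg : ∀ s ai, 0 ≤ poliNew s ai) (hnew_sum : ∀ s, ∑ ai, poliNew s ai = 1)
    (qOld qNew : Qv)
    (Qold Qnew : S → Ai × Ao → ℝ)
    (hQold : isQFun r γ p β c polo poliOld qOld Qold)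
    (hQnew : isQFun r γ p β c polo poliNew qNew Qnew)
    -- (π_new^i, q_new) maximizes the per-state objective evaluated with Q^{π_old}
    (hmax : ∀ s, ∀ poli : S → Ai → ℝ, (∀ s' ai, 0 ≤ poli s' ai) →
      (∀ s', ∑ ai, poli s' ai = 1) → ∀ q : Qv,
        improveObj β c polo Qold poli q s ≤ improveObj β c polo Qold poliNew qNew s) :
    ∀ s a, Qold s a ≤ Qnew s a := by
  intro s a
  obtain ⟨x0, -, hx0⟩ := Finset.exists_min_image (Finset.univ : Finset (S × (Ai × Ao)))
    (fun x => Qnew x.1 x.2 - Qold x.1 x.2) ⟨(s, a), Finset.mem_univ _⟩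
  set m := Qnew x0.1 x0.2 - Qold x0.1 x0.2 with hm
  have hmle : ∀ s' a', m ≤ Qnew s' a' - Qold s' a' := fun s' a' =>
    hx0 (s', a') (Finset.mem_univ _)
  clear_value m
  have hkey : ∀ s', improveObj β c polo Qold poliOld qOld s' + m ≤
      improveObj β c polo Qnew poliNew qNew s' := by
    intro s'
    have h1 : improveObj β c polo Qold poliOld qOld s' ≤
        improveObj β c polo Qold poliNew qNew s' :=
      hmax s' poliOld hold_nonneg hold_sum qOld
    have hdiff : improveObj β c polo Qnew poliNew qNew s' -
        improveObj β c polo Qold poliNew qNew s' =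
        ∑ ai, ∑ ao, poliNew s' ai * polo s' ao * (Qnew s' (ai, ao) - Qold s' (ai, ao)) := by
      simp only [improveObj, ← Finset.sum_sub_distrib]
      refine Finset.sum_congr rfl fun ai _ => Finset.sum_congr rfl fun ao _ => ?_
      ring
    have hsum1 : ∑ ai, ∑ ao, poliNew s' ai * polo s' ao = 1 := by
      simp [← Finset.mul_sum, hpolo_sum, hnew_sum]
    have hge : m ≤ ∑ ai, ∑ ao, poliNew s' ai * polo s' ao *
        (Qnew s' (ai, ao) - Qold s' (ai, ao)) := by
      calc m = (∑ ai, ∑ ao, poliNew s' ai * polo s' ao) * m := by rw [hsum1, one_mul]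
        _ = ∑ ai, ∑ ao, poliNew s' ai * polo s' ao * m := by
              simp [Finset.sum_mul]
        _ ≤ _ := by
              refine Finset.sum_le_sum fun ai _ => Finset.sum_le_sum fun ao _ => ?_
              exact mul_le_mul_of_nonneg_left (hmle s' (ai, ao))
                (mul_nonneg (hnew_nonneg s' ai) (hpolo_nonneg s' ao))
    linarith
  have hbell : ∀ s' a', γ * m ≤ Qnew s' a' - Qold s' a' := by
    intro s' a'
    rw [hQnew s' a', hQold s' a']
    have hΔ : (∑ t, p s' a' t * improveObj β c polo Qold poliOld qOld t) + m ≤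
        ∑ t, p s' a' t * improveObj β c polo Qnew poliNew qNew t := by
      have h1 : ∑ t, p s' a' t * (improveObj β c polo Qold poliOld qOld t + m)
          ≤ ∑ t, p s' a' t * improveObj β c polo Qnew poliNew qNew t :=
        Finset.sum_le_sum fun t _ => mul_le_mul_of_nonneg_left (hkey t) (hp_nonneg s' a' t)
      have h2 : ∑ t, p s' a' t * (improveObj β c polo Qold poliOld qOld t + m)
          = (∑ t, p s' a' t * improveObj β c polo Qold poliOld qOld t)
            + (∑ t, p s' a' t) * m := by
        simp [mul_add, Finset.sum_add_distrib, Finset.sum_mul]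
      rw [h2, hp_sum s' a', one_mul] at h1
      exact h1
    have h3 := mul_le_mul_of_nonneg_left
      (by linarith : m ≤ (∑ t, p s' a' t * improveObj β c polo Qnew poliNew qNew t)
        - ∑ t, p s' a' t * improveObj β c polo Qold poliOld qOld t) hγ0
    simp only [mul_sub] at h3
    linarith
  have hm0 : 0 ≤ m := by
    have := hbell x0.1 x0.2
    nlinarith
  linarith [hmle s a]
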